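/- Let W be an admissible double-well potential and, for a > 0, let U_a be the one-dimensional solution of slope a. Then for every δ > 0 there exists a constant C(δ) (depending also on W) such that for all a ≥ δ, all γ ∈ (1/2, 2) and all t ∈ ℝ, |U_a^{−1}(U_{γa}(t)) − γ t| ≤ C(δ)|γ − 1|. -/

import Mathlib

open MeasureTheory Metric Set

/-- An admissible double-well potential: `W ≥ 0`, `W = 0` outside `[-1,1]`, `W` is `C²`
on `[-1,1]`, `W(±1) = 0`, `W'(±1) = 0`, `W''(±1) > 0`, `W' > 0` on `(-1,0)`,
`W' < 0` on `(0,1)` and `W''(0) < 0`. -/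
structure DoubleWell (W : ℝ → ℝ) : Prop where
  nonneg : ∀ t, 0 ≤ W t
  zero_outside : ∀ t, 1 < |t| → W t = 0
  smooth : ContDiffOn ℝ 2 W (Set.Icc (-1) 1)
  zero_at_one : W 1 = 0
  zero_at_neg_one : W (-1) = 0
  deriv_at_one : deriv W 1 = 0
  deriv_at_neg_one : deriv W (-1) = 0
  dd_one : 0 < derivWithin (derivWithin W (Set.Icc (-1) 1)) (Set.Icc (-1) 1) 1
  dd_neg_one : 0 < derivWithin (derivWithin W (Set.Icc (-1) 1)) (Set.Icc (-1) 1) (-1)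
  deriv_pos : ∀ t ∈ Set.Ioo (-1 : ℝ) 0, 0 < deriv W t
  deriv_neg : ∀ t ∈ Set.Ioo (0 : ℝ) 1, deriv W t < 0
  dd_zero : deriv (deriv W) 0 < 0

/-- `U` is the one-dimensional solution of slope `a`: the strictly increasing solution of
`U'' = W'(U)` with `U(0) = 0` and first integral `(U')² = 2W(U) + a²`, characterized by
`U' = √(2W(U) + a²)`. -/
def IsUa (W : ℝ → ℝ) (a : ℝ) (U : ℝ → ℝ) : Prop :=
  U 0 = 0 ∧ ∀ t, HasDerivAt U (Real.sqrt (2 * W (U t) + a ^ 2)) t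

/-!
Since `U_a' = √(2 W(U_a) + a²)`, the inverse of `U_a` is `x ↦ ∫₀ˣ ds / √(2 W(s) + a²)`.
Hence, with `x = U_{γa}(t)`,
`U_a⁻¹(x) - γ t = ∫₀ˣ (1 / √(2W + a²) - γ / √(2W + γ²a²))`.
The integrand vanishes outside `[-1, 1]`, where `W = 0`, and rationalizing the difference bounds
it by `6 W |γ - 1| / a³`; so the integral is at most `12 (sup W) |γ - 1| / δ³`.
-/

namespace DoubleWell

variable {W : ℝ → ℝ}

lemma eq_zero_of_notMem_Ioo (hW : DoubleWell W) {t : ℝ} (ht : t ∉ Ioo (-1) 1) : W t = 0 := by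
  by_cases h : 1 < |t|
  · exact hW.zero_outside t h
  · have ht1 : |t| = 1 :=
      le_antisymm (not_lt.mp h) (not_lt.mp fun h' => ht (abs_lt.mp h'))
    rcases (abs_eq zero_le_one).mp ht1 with rfl | rfl
    exacts [hW.zero_at_one, hW.zero_at_neg_one]

lemma eq_zero_of_notMem_Icc (hW : DoubleWell W) {t : ℝ} (ht : t ∉ Icc (-1) 1) : W t = 0 :=
  hW.eq_zero_of_notMem_Ioo fun h => ht (Ioo_subset_Icc_self h)

protected lemma continuous (hW : DoubleWell W) : Continuous W := by
  have hcover : Icc (-1 : ℝ) 1 ∪ (Ioo (-1) 1)ᶜ = univ :=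
    eq_univ_of_forall fun t => by
      by_cases ht : t ∈ Ioo (-1 : ℝ) 1
      exacts [Or.inl (Ioo_subset_Icc_self ht), Or.inr ht]
  rw [← continuousOn_univ, ← hcover]
  exact hW.smooth.continuousOn.union_of_isClosed
    (continuousOn_const.congr fun t ht => hW.eq_zero_of_notMem_Ioo ht)
    isClosed_Icc isOpen_Ioo.isClosed_compl

lemma hasCompactSupport (hW : DoubleWell W) : HasCompactSupport W :=
  HasCompactSupport.intro isCompact_Icc fun _ ht => hW.eq_zero_of_notMem_Icc ht

end DoubleWell

/-- The slope `U_a' = √(2 W(U_a) + a²)` of the one-dimensional solution, as a function of `U_a`. -/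
noncomputable def speed (W : ℝ → ℝ) (a s : ℝ) : ℝ := √(2 * W s + a ^ 2)

section speed

variable {W : ℝ → ℝ} {a : ℝ}

lemma speed_pos (hW : ∀ t, 0 ≤ W t) (ha : a ≠ 0) (s : ℝ) : 0 < speed W a s :=
  Real.sqrt_pos.mpr (by have := hW s; positivity)

lemma continuous_speed (hW : Continuous W) : Continuous (speed W a) :=
  ((continuous_const.mul hW).add continuous_const).sqrt

lemma speed_of_eq_zero {s : ℝ} (hs : W s = 0) : speed W a s = |a| := by
  rw [speed, hs, mul_zero, zero_add, Real.sqrt_sq_eq_abs]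

lemma inv_speed_sub_eq_zero_of_eq_zero {s γ : ℝ} (hs : W s = 0) (ha : 0 < a) (hγ : 0 < γ) :
    (speed W a s)⁻¹ - γ * (speed W (γ * a) s)⁻¹ = 0 := by
  rw [speed_of_eq_zero hs, speed_of_eq_zero hs, abs_of_pos ha, abs_of_pos (mul_pos hγ ha),
    mul_inv, ← mul_assoc, mul_inv_cancel₀ hγ.ne', one_mul, sub_self]

lemma abs_inv_speed_sub_le {s γ : ℝ} (hs : 0 ≤ W s) (ha : 0 < a) (hγ : 1 / 2 < γ) :
    |(speed W a s)⁻¹ - γ * (speed W (γ * a) s)⁻¹| ≤ 6 * W s * |γ - 1| / a ^ 3 := by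
  have hγ0 : 0 < γ := by linarith
  obtain ⟨A, hA⟩ : ∃ A, speed W a s = A := ⟨_, rfl⟩
  obtain ⟨B, hB⟩ : ∃ B, speed W (γ * a) s = B := ⟨_, rfl⟩
  have hA2 : A ^ 2 = 2 * W s + a ^ 2 := hA ▸ Real.sq_sqrt (by positivity)
  have hB2 : B ^ 2 = 2 * W s + (γ * a) ^ 2 := hB ▸ Real.sq_sqrt (by positivity)
  have haA : a ≤ A := hA ▸ Real.le_sqrt_of_sq_le (by linarith)
  have hγaB : γ * a ≤ B := hB ▸ Real.le_sqrt_of_sq_le (by linarith)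
  have hA0 : 0 < A := ha.trans_le haA
  have hB0 : 0 < B := (mul_pos hγ0 ha).trans_le hγaB
  -- rationalize: `(B - γ A) (B + γ A) = B² - γ² A² = 2 W (1 - γ²)`
  have hrat : A⁻¹ - γ * B⁻¹ = 2 * W s * (1 - γ) * (1 + γ) / ((B + γ * A) * A * B) := by
    field_simp
    linear_combination hB2 - γ ^ 2 * hA2
  have hdenom : 2 * γ ^ 2 * a ^ 3 ≤ (B + γ * A) * A * B :=
    calc 2 * γ ^ 2 * a ^ 3 = (γ * a + γ * a) * a * (γ * a) := by ring
      _ ≤ (B + γ * A) * A * B := by gcongr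
  have hnum : |2 * W s * (1 - γ) * (1 + γ)| = 2 * W s * |γ - 1| * (1 + γ) := by
    rw [abs_mul, abs_mul, abs_of_nonneg (by positivity : 0 ≤ 2 * W s),
      abs_of_pos (by linarith : 0 < 1 + γ), abs_sub_comm]
  rw [hA, hB, hrat, abs_div, hnum, abs_of_pos (by positivity : 0 < (B + γ * A) * A * B)]
  calc 2 * W s * |γ - 1| * (1 + γ) / ((B + γ * A) * A * B)
      ≤ 2 * W s * |γ - 1| * (1 + γ) / (2 * γ ^ 2 * a ^ 3) := by gcongr
    _ ≤ 6 * W s * |γ - 1| / a ^ 3 := by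
      rw [div_le_div_iff₀ (by positivity) (by positivity)]
      have : 1 + γ ≤ 6 * γ ^ 2 := by nlinarith
      have : 0 ≤ W s * |γ - 1| * a ^ 3 := by positivity
      nlinarith

end speed

theorem intervalIntegral_inv_eq_sub_of_hasDerivAt {f U : ℝ → ℝ} (hf : Continuous f)
    (hf0 : ∀ s, f s ≠ 0) (hU : ∀ t, HasDerivAt U (f (U t)) t) (x y : ℝ) :
    ∫ s in U x..U y, (f s)⁻¹ = y - x := by
  have hUc : Continuous U := continuous_iff_continuousAt.2 fun t => (hU t).continuousAt
  rw [← intervalIntegral.integral_comp_mul_deriv (g := fun s => (f s)⁻¹) (fun t _ => hU t)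
    (hf.comp hUc).continuousOn (hf.inv₀ hf0)]
  simp [hf0]

lemma IsUa.integral_inv_speed {W U : ℝ → ℝ} {a : ℝ} (hWc : Continuous W)
    (hW : ∀ t, 0 ≤ W t) (ha : a ≠ 0) (hU : IsUa W a U) (y : ℝ) :
    ∫ s in 0..U y, (speed W a s)⁻¹ = y := by
  simpa [hU.1] using intervalIntegral_inv_eq_sub_of_hasDerivAt (continuous_speed hWc)
    (fun s => (speed_pos hW ha s).ne') hU.2 0 y

theorem norm_intervalIntegral_le_of_eq_zero_outside {E : Type*} [NormedAddCommGroup E]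
    [NormedSpace ℝ E] {f : ℝ → E} {K : Set ℝ} {c : ℝ} (hf : Continuous f) (hK : IsCompact K)
    (hzero : ∀ s ∉ K, f s = 0) (hc : ∀ s ∈ K, ‖f s‖ ≤ c) (x y : ℝ) :
    ‖∫ s in x..y, f s‖ ≤ c * volume.real K := by
  have hint : Integrable f := hf.integrable_of_hasCompactSupport (.intro hK hzero)
  calc ‖∫ s in x..y, f s‖ ≤ ∫ s in uIoc x y, ‖f s‖ :=
        intervalIntegral.norm_integral_le_integral_norm_uIoc
    _ ≤ ∫ s, ‖f s‖ := setIntegral_le_integral hint.norm (.of_forall fun _ => norm_nonneg _)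
    _ = ∫ s in K, ‖f s‖ :=
        (setIntegral_eq_integral_of_forall_compl_eq_zero fun s hs => by simp [hzero s hs]).symm
    _ ≤ c * volume.real K := by
        refine le_trans (le_abs_self _) ?_
        rw [← Real.norm_eq_abs]
        exact norm_setIntegral_le_of_norm_le_const hK.measure_lt_top
          fun s hs => by simpa using hc s hs

/-- **Theorem (Statement 7).** Let `W` be an admissible double-well potential. For every
`δ > 0` there is a constant `C(δ)` such that for all `a ≥ δ`, all `γ ∈ (1/2, 2)` and
all `t ∈ ℝ`, `|U_a⁻¹(U_{γa}(t)) - γ t| ≤ C(δ) |γ - 1|` (here `y = U_a⁻¹(U_{γa}(t))`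
is expressed as the unique `y` with `U_a(y) = U_{γa}(t)`). -/
theorem statement7 (W : ℝ → ℝ) (hW : DoubleWell W) (δ : ℝ) (hδ : 0 < δ) :
    ∃ C : ℝ, 0 < C ∧
      ∀ a : ℝ, δ ≤ a → ∀ γ : ℝ, 1 / 2 < γ → γ < 2 →
        ∀ U V : ℝ → ℝ, IsUa W a U → IsUa W (γ * a) V →
          ∀ t y : ℝ, U y = V t → |y - γ * t| ≤ C * |γ - 1| := by
  obtain ⟨M, hM⟩ := hW.continuous.bounded_above_of_compact_support hW.hasCompactSupport
  have hM0 : 0 ≤ M := (norm_nonneg _).trans (hM 0)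
  have hWM (s : ℝ) : W s ≤ M := (le_abs_self _).trans (hM s)
  refine ⟨12 * (M + 1) / δ ^ 3, by positivity, ?_⟩
  intro a ha γ hγ _ U V hU hV t y hUV
  have ha0 : 0 < a := hδ.trans_le ha
  have hγa : 0 < γ * a := mul_pos (by linarith) ha0
  have hspeed (b : ℝ) (hb : 0 < b) : Continuous fun s => (speed W b s)⁻¹ :=
    (continuous_speed hW.continuous).inv₀ fun s => (speed_pos hW.nonneg hb.ne' s).ne'
  have hdiff : y - γ * t = ∫ s in 0..U y, ((speed W a s)⁻¹ - γ * (speed W (γ * a) s)⁻¹) := by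
    rw [intervalIntegral.integral_sub ((hspeed a ha0).intervalIntegrable _ _)
      (((hspeed _ hγa).const_mul γ).intervalIntegrable _ _), intervalIntegral.integral_const_mul,
      hU.integral_inv_speed hW.continuous hW.nonneg ha0.ne', hUV,
      hV.integral_inv_speed hW.continuous hW.nonneg hγa.ne']
  rw [hdiff, ← Real.norm_eq_abs]
  calc _ ≤ 6 * (M + 1) * |γ - 1| / δ ^ 3 * volume.real (Icc (-1 : ℝ) 1) := by
        refine norm_intervalIntegral_le_of_eq_zero_outside ((hspeed a ha0).sub
          ((hspeed _ hγa).const_mul γ)) isCompact_Icc (fun s hs => ?_) (fun s _ => ?_) _ _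
          <;> dsimp only [Pi.sub_apply]
        · exact inv_speed_sub_eq_zero_of_eq_zero (hW.eq_zero_of_notMem_Icc hs) ha0 (by linarith)
        · refine (abs_inv_speed_sub_le (hW.nonneg s) ha0 hγ).trans ?_
          have := hW.nonneg s
          gcongr
          linarith [hWM s]
    _ = 12 * (M + 1) / δ ^ 3 * |γ - 1| := by
        rw [Real.volume_real_Icc_of_le (by norm_num)]
        ring
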